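/- arXiv:1805.07645 — 2 statements merged into one kernel-verified Lean document; each statement's English description precedes it below -/
import Mathlib

section
/- Let H be a normed vector space, c : H → [0,∞) a scale function, r : [0,∞) → [0,∞) with z ≤ r(z) for all z ≥ 0, and R : H → [0,∞) with r(c(θ)) ≤ R(θ) < ∞ for all θ. Suppose L̂_η, L_η, L : H → ℝ satisfy: (i) |L̂_η(θ) − L_η(θ)| ≤ ε·c(θ) for all θ, (ii) |L_η(θ) − L(θ)| ≤ ε'·c(θ) for all θ with ε' ≤ ε, (iii) θ* minimizes L over H, θ_η* minimizes L_η over H, and (iv) θ̂_η is a ξ-approximate minimizer of L̂_η + λ·R, i.e., L̂_η(θ̂_η) + λR(θ̂_η) ≤ ξ + inf_θ (L̂_η(θ) + λR(θ)), with λ = α·ε for α ≥ 2. Then L(θ̂_η) − L(θ*) ≤ ε·(α·R(θ_η*) + c(θ_η*)) + ε'·c(θ*) + ξ. -/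
/-! The two deviation bounds cost at most `(ε + ε') c(θ̂_η) ≤ 2ε c(θ̂_η)` at `θ̂_η`, which the
penalty `λ R(θ̂_η)` absorbs since `c ≤ r ∘ c ≤ R` and `α ≥ 2`. After that, `ξ`-optimality of `θ̂_η`
is tested against `θ_η*`, and one returns from `L̂_η` to `L_η` at `θ_η*`, from `θ_η*` to `θ*` by
optimality of `θ_η*` for `L_η`, and from `L_η` to `L` at `θ*`. -/

theorem deviation_le_penalty {ε ε' α c R : ℝ} (hc : 0 ≤ c) (hε : 0 ≤ ε) (hα : 2 ≤ α)
    (hεε' : ε' ≤ ε) (hcR : c ≤ R) : ε * c + ε' * c ≤ α * ε * R := by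
  have hεα : 0 ≤ α * ε := by positivity
  nlinarith [mul_le_mul_of_nonneg_right hεε' hc, mul_le_mul_of_nonneg_right hα hε,
    mul_le_mul_of_nonneg_left hcR hεα]

theorem stmt2_general {H : Type*}
    (c : H → ℝ) (hc : ∀ θ, 0 ≤ c θ)
    (r : ℝ → ℝ) (hr : ∀ z, 0 ≤ z → z ≤ r z)
    (R : H → ℝ) (hRr : ∀ θ, r (c θ) ≤ R θ)
    (Lh Lη L : H → ℝ) (ε ε' ξ α : ℝ)
    (hε : 0 ≤ ε) (hα : 2 ≤ α) (hεε' : ε' ≤ ε)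
    (h1 : ∀ θ, |Lh θ - Lη θ| ≤ ε * c θ)
    (h2 : ∀ θ, |Lη θ - L θ| ≤ ε' * c θ)
    (θs θηs θh : H)
    (h4 : ∀ θ, Lη θηs ≤ Lη θ)
    (h5 : ∀ θ, Lh θh + (α * ε) * R θh ≤ ξ + (Lh θ + (α * ε) * R θ)) :
    L θh - L θs ≤ ε * (α * R θηs + c θηs) + ε' * c θs + ξ := by
  have hpen : ε * c θh + ε' * c θh ≤ α * ε * R θh :=
    deviation_le_penalty (hc θh) hε hα hεε' ((hr _ (hc θh)).trans (hRr θh))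
  have hLh_θh := (abs_sub_le_iff.mp (h1 θh)).2
  have hLη_θh := (abs_sub_le_iff.mp (h2 θh)).2
  have hLh_θηs := (abs_sub_le_iff.mp (h1 θηs)).1
  have hLη_θs := (abs_sub_le_iff.mp (h2 θs)).1
  linarith [h5 θηs, h4 θs]

/-- Perturbed loss consistency. -/
theorem stmt2 {H : Type*} [NormedAddCommGroup H] [NormedSpace ℝ H]
    (c : H → ℝ) (hc : ∀ θ, 0 ≤ c θ)
    (r : ℝ → ℝ) (hr0 : ∀ z, 0 ≤ z → 0 ≤ r z) (hr : ∀ z, 0 ≤ z → z ≤ r z)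
    (R : H → ℝ) (hR0 : ∀ θ, 0 ≤ R θ) (hRr : ∀ θ, r (c θ) ≤ R θ)
    (Lh Lη L : H → ℝ) (ε ε' ξ α : ℝ)
    (hε : 0 ≤ ε) (hε' : 0 ≤ ε') (hξ : 0 ≤ ξ) (hα : 2 ≤ α) (hεε' : ε' ≤ ε)
    (h1 : ∀ θ, |Lh θ - Lη θ| ≤ ε * c θ)
    (h2 : ∀ θ, |Lη θ - L θ| ≤ ε' * c θ)
    (θs θηs θh : H)
    (h3 : ∀ θ, L θs ≤ L θ)
    (h4 : ∀ θ, Lη θηs ≤ Lη θ)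
    (h5 : ∀ θ, Lh θh + (α * ε) * R θh ≤ ξ + (Lh θ + (α * ε) * R θ)) :
    L θh - L θs ≤ ε * (α * R θηs + c θηs) + ε' * c θs + ξ :=
  stmt2_general c hc r hr R hRr Lh Lη L ε ε' ξ α hε hα hεε' h1 h2 θs θηs θh h4 h5
end

section
/- Under the same assumptions as the perturbed loss consistency theorem, the key intermediate bound holds: L_η(θ̂_η) − L_η(θ_η*) ≤ ε·(−α·r(c(θ̂_η)) + c(θ̂_η)) + ε·(α·R(θ_η*) + c(θ_η*)) + ξ, where θ̂_η is a ξ-approximate minimizer of L̂_η + α·ε·R, θ_η* minimizes L_η, |L̂_η(θ) − L_η(θ)| ≤ ε·c(θ) for all θ, and r(c(θ)) ≤ R(θ) for all θ. -/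
theorem sub_le_of_abs_sub_le_of_add_le_add {X : Type*} {f g e : X → ℝ} (p : X → ℝ) {ξ : ℝ}
    (hfg : ∀ x, |f x - g x| ≤ e x) {x y : X} (hx : f x + p x ≤ ξ + (f y + p y)) :
    g x - g y ≤ ξ + (p y - p x) + (e x + e y) := by
  have hx' := abs_le.mp (hfg x)
  have hy' := abs_le.mp (hfg y)
  linarith [hx'.1, hy'.2]

theorem stmt3_general {H : Type*}
    (c : H → ℝ)
    (r : ℝ → ℝ)
    (R : H → ℝ) (hRr : ∀ θ, r (c θ) ≤ R θ)
    (Lh Lη : H → ℝ) (ε ξ α : ℝ)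
    (hε : 0 ≤ ε) (hα : 2 ≤ α)
    (h1 : ∀ θ, |Lh θ - Lη θ| ≤ ε * c θ)
    (θηs θh : H)
    (h5 : ∀ θ, Lh θh + (α * ε) * R θh ≤ ξ + (Lh θ + (α * ε) * R θ)) :
    Lη θh - Lη θηs ≤ ε * (-(α * r (c θh)) + c θh) + ε * (α * R θηs + c θηs) + ξ := by
  have hexcess := sub_le_of_abs_sub_le_of_add_le_add (fun θ => (α * ε) * R θ) h1 (h5 θηs)
  have hpenalty : (α * ε) * r (c θh) ≤ (α * ε) * R θh :=
    mul_le_mul_of_nonneg_left (hRr θh) (mul_nonneg (by linarith) hε)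
  linarith

/-- Key intermediate bound in the proof of perturbed loss consistency. -/
theorem stmt3 {H : Type*} [NormedAddCommGroup H] [NormedSpace ℝ H]
    (c : H → ℝ) (hc : ∀ θ, 0 ≤ c θ)
    (r : ℝ → ℝ) (hr0 : ∀ z, 0 ≤ z → 0 ≤ r z) (hr : ∀ z, 0 ≤ z → z ≤ r z)
    (R : H → ℝ) (hR0 : ∀ θ, 0 ≤ R θ) (hRr : ∀ θ, r (c θ) ≤ R θ)
    (Lh Lη : H → ℝ) (ε ξ α : ℝ)
    (hε : 0 ≤ ε) (hξ : 0 ≤ ξ) (hα : 2 ≤ α)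
    (h1 : ∀ θ, |Lh θ - Lη θ| ≤ ε * c θ)
    (θηs θh : H)
    (h4 : ∀ θ, Lη θηs ≤ Lη θ)
    (h5 : ∀ θ, Lh θh + (α * ε) * R θh ≤ ξ + (Lh θ + (α * ε) * R θ)) :
    Lη θh - Lη θηs ≤ ε * (-(α * r (c θh)) + c θh) + ε * (α * R θηs + c θηs) + ξ :=
  stmt3_general c r R hRr Lh Lη ε ξ α hε hα h1 θηs θh h5
end
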